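/- If θ = u + i v with u, v real and |v| ≤ π/3, then |arg(cosh(θ))| ≤ β₂ · |u| · |v|, where β₂ = 3√3/π. -/

import Mathlib

/-!
Writing `θ = u + v i`, one has `cosh θ = cosh u cos v + i sinh u sin v`, whose real part is
positive for `|v| < π / 2`, so `arg (cosh θ) = arctan (tanh u · tan v)`. Both `tanh` and `tan` are
odd, which reduces the claim to `u, v ≥ 0`. There `arctan t ≤ t`, `tanh u ≤ u`, and, `tan` being
convex on `[0, π / 2)` with `tan 0 = 0`, it lies below its chord on `[0, π / 3]`:
`tan v ≤ (tan (π / 3) / (π / 3)) · v = (3√3 / π) · v`.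
-/

open Real Set

theorem Function.Odd.abs_apply_eq_apply_abs {α β : Type*} [AddCommGroup α] [LinearOrder α]
    [IsOrderedAddMonoid α] [AddCommGroup β] [LinearOrder β] [IsOrderedAddMonoid β]
    {f : α → β} (hf : Function.Odd f) {x : α} (hx : 0 ≤ f |x|) : |f x| = f |x| := by
  rcases abs_choice x with h | h <;> rw [h] at hx ⊢
  · exact abs_of_nonneg hx
  · rw [hf] at hx ⊢
    exact abs_of_nonpos (neg_nonneg.1 hx)

theorem ConvexOn.map_smul_le_of_map_zero {E : Type*} [AddCommGroup E] [Module ℝ E] {s : Set E}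
    {f : E → ℝ} (hf : ConvexOn ℝ s f) (h0 : 0 ∈ s) (hf0 : f 0 = 0) {x : E} (hx : x ∈ s)
    {t : ℝ} (ht0 : 0 ≤ t) (ht1 : t ≤ 1) : f (t • x) ≤ t * f x := by
  simpa [hf0] using hf.2 h0 hx (sub_nonneg.2 ht1) ht0 (sub_add_cancel 1 t)

namespace Complex

theorem cosh_re (z : ℂ) : (cosh z).re = Real.cosh z.re * Real.cos z.im := by
  obtain ⟨x, y, rfl⟩ : ∃ x y : ℝ, z = x + y * I := ⟨_, _, (re_add_im z).symm⟩
  simp [cosh_add, cosh_mul_I, sinh_mul_I, cos_ofReal_re, sin_ofReal_re, sinh_ofReal_re]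

theorem cosh_im (z : ℂ) : (cosh z).im = Real.sinh z.re * Real.sin z.im := by
  obtain ⟨x, y, rfl⟩ : ∃ x y : ℝ, z = x + y * I := ⟨_, _, (re_add_im z).symm⟩
  simp [cosh_add, cosh_mul_I, sinh_mul_I, cos_ofReal_re, sin_ofReal_re, sinh_ofReal_re]

theorem arg_eq_arctan_of_re_pos {z : ℂ} (h : 0 < z.re) : arg z = Real.arctan (z.im / z.re) := by
  have hz := abs_lt.1 (abs_arg_lt_pi_div_two_iff.2 (Or.inl h))
  rw [← tan_arg, Real.arctan_tan hz.1 hz.2]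

theorem arg_cosh {z : ℂ} (h : |z.im| < π / 2) :
    arg (cosh z) = Real.arctan (Real.tanh z.re * Real.tan z.im) := by
  have hcos : 0 < Real.cos z.im := cos_pos_of_mem_Ioo (abs_lt.1 h)
  rw [arg_eq_arctan_of_re_pos (by rw [cosh_re]; positivity), cosh_re, cosh_im,
    Real.tanh_eq_sinh_div_cosh, Real.tan_eq_sin_div_cos, div_mul_div_comm]

end Complex

namespace Real

theorem arctan_le_self {x : ℝ} (hx : 0 ≤ x) : arctan x ≤ x := by
  rcases lt_or_ge x (π / 2) with h | h
  · calc arctan x ≤ arctan (tan x) := arctan_le_arctan_iff.2 (le_tan hx h)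
      _ = x := arctan_tan (by linarith [pi_pos]) h
  · exact (arctan_lt_pi_div_two x).le.trans h

theorem tanh_nonneg {x : ℝ} (hx : 0 ≤ x) : 0 ≤ tanh x := by
  rw [tanh_eq_sinh_div_cosh]
  exact div_nonneg (sinh_nonneg_iff.2 hx) (cosh_pos x).le

theorem sinh_le_mul_cosh {x : ℝ} (hx : 0 ≤ x) : sinh x ≤ x * cosh x := by
  have hderiv : ∀ y ∈ interior (Icc 0 x), deriv sinh y ≤ cosh x := fun y hy => by
    rw [interior_Icc] at hy
    rw [deriv_sinh, cosh_le_cosh, abs_of_pos hy.1, abs_of_nonneg hx]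
    exact hy.2.le
  simpa [mul_comm] using (convex_Icc 0 x).image_sub_le_mul_sub_of_deriv_le
    continuous_sinh.continuousOn differentiable_sinh.differentiableOn hderiv
    0 (left_mem_Icc.2 hx) x (right_mem_Icc.2 hx) hx

theorem tanh_le_self {x : ℝ} (hx : 0 ≤ x) : tanh x ≤ x := by
  rw [tanh_eq_sinh_div_cosh, div_le_iff₀ (cosh_pos x)]
  exact sinh_le_mul_cosh hx

theorem convexOn_tan : ConvexOn ℝ (Ico 0 (π / 2)) tan := by
  have hcos : ∀ x ∈ Ico 0 (π / 2), 0 < cos x := fun x hx =>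
    cos_pos_of_mem_Ioo ⟨by linarith [pi_pos, hx.1], hx.2⟩
  refine MonotoneOn.convexOn_of_deriv (convex_Ico 0 (π / 2))
    (continuousOn_tan.mono fun x hx => (hcos x hx).ne') ?_ ?_ <;> rw [interior_Ico]
  · exact fun x hx =>
      (differentiableAt_tan.2 (hcos x (Ioo_subset_Ico_self hx)).ne').differentiableWithinAt
  · intro x hx y hy hxy
    rw [deriv_tan, deriv_tan]
    have hcos_le : cos y ≤ cos x :=
      cos_le_cos_of_nonneg_of_le_pi hx.1.le (by linarith [hy.2, pi_pos]) hxy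
    have := hcos y (Ioo_subset_Ico_self hy)
    gcongr

theorem tan_le_mul_self {x : ℝ} (hx0 : 0 ≤ x) (hx : x ≤ π / 3) : tan x ≤ 3 * √3 / π * x := by
  have hpi := pi_pos
  have h := convexOn_tan.map_smul_le_of_map_zero ⟨le_rfl, by positivity⟩ tan_zero
    (x := π / 3) ⟨by positivity, by linarith⟩ (t := x / (π / 3)) (by positivity)
    ((div_le_one (by positivity)).2 hx)
  rw [smul_eq_mul, div_mul_cancel₀ _ (by positivity), tan_pi_div_three] at h
  calc tan x ≤ x / (π / 3) * √3 := h
    _ = 3 * √3 / π * x := by field_simp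

theorem arctan_tanh_mul_tan_le {x y : ℝ} (hx : 0 ≤ x) (hy0 : 0 ≤ y) (hy : y ≤ π / 3) :
    arctan (tanh x * tan y) ≤ 3 * √3 / π * x * y := by
  have htan : 0 ≤ tan y := tan_nonneg_of_nonneg_of_le_pi_div_two hy0 (by linarith [pi_pos])
  calc arctan (tanh x * tan y)
      ≤ tanh x * tan y := arctan_le_self (mul_nonneg (tanh_nonneg hx) htan)
    _ ≤ x * (3 * √3 / π * y) := mul_le_mul (tanh_le_self hx) (tan_le_mul_self hy0 hy) htan hx
    _ = 3 * √3 / π * x * y := by ring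

end Real

theorem abs_arg_cosh_le (θ : ℂ) (hv : |θ.im| ≤ π / 3) :
    |Complex.arg (Complex.cosh θ)| ≤ (3 * Real.sqrt 3 / π) * |θ.re| * |θ.im| := by
  have hpi := pi_pos
  have hv' : |θ.im| ≤ π / 2 := by linarith
  have htanh : |tanh θ.re| = tanh |θ.re| :=
    Function.Odd.abs_apply_eq_apply_abs tanh_neg (tanh_nonneg (abs_nonneg _))
  have htan : |tan θ.im| = tan |θ.im| :=
    Function.Odd.abs_apply_eq_apply_abs tan_neg
      (tan_nonneg_of_nonneg_of_le_pi_div_two (abs_nonneg _) hv')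
  have harctan : 0 ≤ arctan |tanh θ.re * tan θ.im| := arctan_nonneg.2 (abs_nonneg _)
  rw [Complex.arg_cosh (by linarith), Function.Odd.abs_apply_eq_apply_abs arctan_neg harctan,
    abs_mul, htanh, htan]
  exact arctan_tanh_mul_tan_le (abs_nonneg _) (abs_nonneg _) hv
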